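/- arXiv:1305.1614 — 2 statements merged into one kernel-verified Lean document; each statement's English description precedes it below -/
import Mathlib

section
/- Let φ : Op(D^n) → R be a real analytic function on a neighborhood of the unit real disc D^n ⊂ R^n ⊂ C^n satisfying dd^C φ = 0, φ|_{D^n} = 0, and ∂φ/∂y_k = 0 on D^n for all k = 1,…,n. Then φ vanishes to infinite order along D^n (and hence φ ≡ 0 near D^n by unique continuation for real analytic functions). -/
/-- The twisted differential `d^ℂφ(v) = dφ(iv)` of a real-valued function on `ℂⁿ`. -/
noncomputable def dC {n : ℕ} (φ : (Fin n → ℂ) → ℝ) (x v : Fin n → ℂ) : ℝ :=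
  fderiv ℝ φ x (Complex.I • v)

/-- The 2-form `dd^ℂφ`, evaluated on (constant) vector fields:
`dd^ℂφ(v,w) = ∂_v (d^ℂφ(w)) − ∂_w (d^ℂφ(v))`. -/
noncomputable def ddC {n : ℕ} (φ : (Fin n → ℂ) → ℝ) (x v w : Fin n → ℂ) : ℝ :=
  fderiv ℝ (fun y => dC φ y w) x v - fderiv ℝ (fun y => dC φ y v) x w

/-- `φ` is i-convex (strictly plurisubharmonic) on `U`:
`ω_φ(v, iv) > 0` for `v ≠ 0`, where `ω_φ = −dd^ℂφ`. -/
def IConvexOn {n : ℕ} (U : Set (Fin n → ℂ)) (φ : (Fin n → ℂ) → ℝ) : Prop :=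
  ∀ x ∈ U, ∀ v : Fin n → ℂ, v ≠ 0 → 0 < -ddC φ x v (Complex.I • v)

/-- The closed unit disc `D^n ⊂ ℝⁿ ⊂ ℂⁿ`. -/
def realDisc (n : ℕ) : Set (Fin n → ℂ) :=
  {z | (∀ k, (z k).im = 0) ∧ (∑ k, (z k).re ^ 2) ≤ 1}

/-!
Let `S` be the open real unit disc. By induction on `m`, `D^m φ` vanishes on `S`; since `φ` is
analytic, `D^m φ(x)` is symmetric, so it suffices to test it on the real basis `e_k, i e_k` of
`ℂⁿ`. If some argument is a real vector `e_k`, the value is a derivative of `D^{m-1} φ` along `S`,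
hence zero. If all arguments are imaginary, then for `m = 1` this is the hypothesis on
`∂φ/∂y_k`, and for `m ≥ 2` the identity `D²φ(iv, iw) = -D²φ(v, w)`, which is `dd^ℂ φ = 0`,
trades two imaginary arguments for real ones. By continuity all derivatives vanish on the closed
disc `D^n`, so the Taylor series of `φ` at each of its points is zero.
-/

open Set Filter Topology Complex
open scoped ContDiff

section Calculus

variable {𝕜 E F : Type*} [NontriviallyNormedField 𝕜] [NormedAddCommGroup E] [NormedSpace 𝕜 E]
  [NormedAddCommGroup F] [NormedSpace 𝕜 F]

theorem fderiv_apply_eq_zero_of_eventually_eq_zero {f : E → F} {x v : E}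
    (hf : DifferentiableAt 𝕜 f x) (h : ∀ᶠ t : 𝕜 in 𝓝 0, f (x + t • v) = 0) :
    fderiv 𝕜 f x v = 0 := by
  have h' : (fun t : 𝕜 => f (x + t • v)) =ᶠ[𝓝 0] fun _ => 0 := h
  rw [← hf.lineDeriv_eq_fderiv, lineDeriv, h'.deriv_eq, deriv_const]

theorem iteratedFDeriv_succ_apply_eq_zero_of_eventually {f : E → F} {x : E} {m : ℕ}
    (hf : ContDiffAt 𝕜 ω f x) (v : Fin (m + 1) → E) (i : Fin (m + 1))
    (h : ∀ᶠ t : 𝕜 in 𝓝 0, iteratedFDeriv 𝕜 m f (x + t • v i) = 0) :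
    iteratedFDeriv 𝕜 (m + 1) f x v = 0 := by
  have hd : fderiv 𝕜 (iteratedFDeriv 𝕜 m f) x (v i) = 0 :=
    fderiv_apply_eq_zero_of_eventually_eq_zero
      (hf.differentiableAt_iteratedFDeriv (WithTop.coe_lt_top _)) h
  rw [← hf.iteratedFDeriv_comp_perm v (Equiv.swap 0 i), iteratedFDeriv_succ_apply_left]
  simp [hd]

theorem iteratedFDeriv_add_two_snoc_snoc {f : E → F} {x : E} {m : ℕ}
    (hf : ContDiffAt 𝕜 (m + 2) f x) (u : Fin m → E) (a b : E) :
    iteratedFDeriv 𝕜 (m + 2) f x (Fin.snoc (Fin.snoc u a) b) =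
      iteratedFDeriv 𝕜 m (fun y => fderiv 𝕜 (fderiv 𝕜 f) y a b) x u := by
  let ev : (E →L[𝕜] E →L[𝕜] F) →L[𝕜] F :=
    (ContinuousLinearMap.apply 𝕜 F b).comp (ContinuousLinearMap.apply 𝕜 _ a)
  have hf2 : ContDiffAt 𝕜 m (fderiv 𝕜 (fderiv 𝕜 f)) x :=
    (hf.fderiv_right (by norm_cast)).fderiv_right le_rfl
  rw [iteratedFDeriv_succ_apply_right, Fin.init_snoc, Fin.snoc_last,
    iteratedFDeriv_succ_apply_right, Fin.init_snoc, Fin.snoc_last]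
  exact congrArg (· u) (ev.iteratedFDeriv_comp_left hf2 le_rfl).symm

theorem AnalyticAt.eventually_eq_zero_of_iteratedFDeriv_eq_zero [CharZero 𝕜] [CompleteSpace F]
    {f : E → F} {x : E} (hf : AnalyticAt 𝕜 f x) (h : ∀ m, iteratedFDeriv 𝕜 m f x = 0) :
    ∀ᶠ z in 𝓝 x, f z = 0 := by
  obtain ⟨p, r, hp⟩ := hf
  filter_upwards [Metric.eball_mem_nhds x hp.r_pos] with z hz
  have hsum := hp.hasSum_iteratedFDeriv (y := z - x) (by
    rwa [Metric.mem_eball, edist_eq_enorm_sub, sub_zero, ← edist_eq_enorm_sub])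
  rw [add_sub_cancel] at hsum
  refine hsum.unique ?_
  simp only [h, zero_apply, smul_zero]
  exact hasSum_zero

end Calculus

section Pluriharmonic

variable {n : ℕ} {φ : (Fin n → ℂ) → ℝ} {x : Fin n → ℂ}

theorem fderiv_fderiv_I_smul_I_smul (hφ : ContDiffAt ℝ 2 φ x) (hddc : ∀ v w, ddC φ x v w = 0)
    (v w : Fin n → ℂ) :
    fderiv ℝ (fderiv ℝ φ) x (I • v) (I • w) = -fderiv ℝ (fderiv ℝ φ) x v w := by
  have hd : DifferentiableAt ℝ (fderiv ℝ φ) x :=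
    (hφ.fderiv_right (m := 1) (by norm_num)).differentiableAt (by norm_num)
  have hdC (u v) : fderiv ℝ (fun y => dC φ y u) x v = fderiv ℝ (fderiv ℝ φ) x v (I • u) := by
    simp [dC, fderiv_clm_apply hd (differentiableAt_const _)]
  have h := hddc v (I • w)
  rw [ddC, hdC, hdC, smul_smul, I_mul_I, neg_one_smul, map_neg,
    hφ.isSymmSndFDerivAt (by simp) (I • w) (I • v)] at h
  linarith

theorem iteratedFDeriv_snoc_snoc_I_smul {m : ℕ} (hφ : ContDiffAt ℝ ∞ φ x)
    (hddc : ∀ᶠ y in 𝓝 x, ∀ v w, ddC φ y v w = 0) (u : Fin m → Fin n → ℂ) (a b : Fin n → ℂ) :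
    iteratedFDeriv ℝ (m + 2) φ x (Fin.snoc (Fin.snoc u (I • a)) (I • b)) =
      -iteratedFDeriv ℝ (m + 2) φ x (Fin.snoc (Fin.snoc u a) b) := by
  have hloc : (fun y => fderiv ℝ (fderiv ℝ φ) y (I • a) (I • b)) =ᶠ[𝓝 x]
      -fun y => fderiv ℝ (fderiv ℝ φ) y a b := by
    filter_upwards [(hφ.of_le (m := 2) (WithTop.coe_le_coe.mpr le_top)).eventually (by simp),
      hddc] with y hy hy'
    exact fderiv_fderiv_I_smul_I_smul hy hy' a b
  have hφ' : ContDiffAt ℝ (m + 2) φ x := hφ.of_le (WithTop.coe_le_coe.mpr le_top)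
  rw [iteratedFDeriv_add_two_snoc_snoc hφ', iteratedFDeriv_add_two_snoc_snoc hφ',
    (hloc.iteratedFDeriv ℝ m).eq_of_nhds, iteratedFDeriv_neg_apply]
  rfl

end Pluriharmonic

def openRealDisc (n : ℕ) : Set (Fin n → ℂ) :=
  {z | (∀ k, (z k).im = 0) ∧ ∑ k, (z k).re ^ 2 < 1}

theorem openRealDisc_subset_realDisc {n : ℕ} : openRealDisc n ⊆ realDisc n :=
  fun _ hz => ⟨hz.1, hz.2.le⟩

theorem realDisc_subset_closure_openRealDisc {n : ℕ} : realDisc n ⊆ closure (openRealDisc n) := by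
  intro x hx
  have hlim : Tendsto (fun t : ℝ => t • x) (𝓝[<] 1) (𝓝 x) :=
    ((continuous_id.smul continuous_const).tendsto' 1 x (one_smul ℝ x)).mono_left
      nhdsWithin_le_nhds
  refine mem_closure_of_tendsto hlim ?_
  filter_upwards [Ioo_mem_nhdsLT zero_lt_one] with t ⟨ht0, ht1⟩
  refine ⟨fun k => by simp [hx.1 k], ?_⟩
  calc ∑ k, ((t • x) k).re ^ 2 = t ^ 2 * ∑ k, (x k).re ^ 2 := by
        simp [Finset.mul_sum, mul_pow]
    _ < 1 := by nlinarith [hx.2, Finset.sum_nonneg fun k (_ : k ∈ Finset.univ) => sq_nonneg (x k).re]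

theorem eventually_add_smul_mem_openRealDisc {n : ℕ} {x a : Fin n → ℂ} (hx : x ∈ openRealDisc n)
    (ha : ∀ k, (a k).im = 0) : ∀ᶠ t : ℝ in 𝓝 0, x + t • a ∈ openRealDisc n := by
  have hcont : Continuous fun t : ℝ => ∑ k, ((x + t • a) k).re ^ 2 := by fun_prop
  filter_upwards [hcont.continuousAt.eventually_lt continuousAt_const (by simpa using hx.2)]
    with t ht
  exact ⟨fun k => by simp [hx.1 k, ha k], ht⟩

theorem iteratedFDeriv_succ_apply_eq_zero_of_im_eq_zero {n m : ℕ} {φ : (Fin n → ℂ) → ℝ}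
    {x : Fin n → ℂ} (hφ : AnalyticAt ℝ φ x) (hx : x ∈ openRealDisc n)
    (hm : ∀ y ∈ openRealDisc n, iteratedFDeriv ℝ m φ y = 0) (v : Fin (m + 1) → Fin n → ℂ)
    (i : Fin (m + 1)) (hv : ∀ k, (v i k).im = 0) : iteratedFDeriv ℝ (m + 1) φ x v = 0 :=
  iteratedFDeriv_succ_apply_eq_zero_of_eventually hφ.contDiffAt v i <|
    (eventually_add_smul_mem_openRealDisc hx hv).mono fun _ ht => hm _ ht

theorem iteratedFDeriv_eq_zero_of_mem_openRealDisc {n : ℕ} {φ : (Fin n → ℂ) → ℝ}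
    (hφ : ∀ x ∈ openRealDisc n, AnalyticAt ℝ φ x)
    (hddc : ∀ x ∈ openRealDisc n, ∀ᶠ y in 𝓝 x, ∀ v w, ddC φ y v w = 0)
    (h0 : ∀ x ∈ openRealDisc n, φ x = 0)
    (hy : ∀ x ∈ openRealDisc n, ∀ k, fderiv ℝ φ x (Pi.single k I) = 0) (m : ℕ) :
    ∀ x ∈ openRealDisc n, iteratedFDeriv ℝ m φ x = 0 := by
  induction m with
  | zero =>
    intro x hx
    ext v
    simp [h0 x hx]
  | succ m ih =>
    intro x hx
    have hreal (v : Fin (m + 1) → Fin n → ℂ) (i : Fin (m + 1)) (k : Fin n)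
        (hv : v i = Pi.single k 1) : iteratedFDeriv ℝ (m + 1) φ x v = 0 :=
      iteratedFDeriv_succ_apply_eq_zero_of_im_eq_zero (hφ x hx) hx ih v i <| by
        simp [hv, Pi.single_apply, apply_ite]
    apply ContinuousMultilinearMap.toMultilinearMap_injective
    refine Module.Basis.ext_multilinear (fun _ => Pi.basis fun _ : Fin n => basisOneI) fun w => ?_
    show iteratedFDeriv ℝ (m + 1) φ x (fun i => Pi.basis (fun _ => basisOneI) (w i)) = 0
    simp only [Pi.basis_apply, coe_basisOneI]
    by_cases hw : ∃ i, (w i).2 = 0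
    · obtain ⟨i, hi⟩ := hw
      exact hreal _ i (w i).1 (by simp [hi])
    · have hI : (fun i => Pi.single (w i).1 (![1, I] (w i).2)) =
          fun i => I • (Pi.single (w i).1 1 : Fin n → ℂ) := by
        ext i : 1
        simp [Fin.eq_one_of_ne_zero _ (not_exists.mp hw i), ← Pi.single_smul']
      rw [hI]
      rcases m with _ | m
      · simpa [iteratedFDeriv_one_apply, ← Pi.single_smul'] using hy x hx (w 0).1
      · rw [← Fin.snoc_init_self (fun i => I • _), ← Fin.snoc_init_self (Fin.init _)]
        refine (iteratedFDeriv_snoc_snoc_I_smul (hφ x hx).contDiffAt (hddc x hx) _ _ _).trans ?_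
        rw [neg_eq_zero]
        exact hreal _ (Fin.last _) _ (Fin.snoc_last _ _)

/-- A real analytic function on a neighborhood of `D^n ⊂ ℝⁿ ⊂ ℂⁿ` with `dd^ℂ φ = 0`,
vanishing on `D^n` and with vanishing `y`-derivatives along `D^n`, vanishes to infinite order
along `D^n`, and hence vanishes identically on a neighborhood of `D^n`. -/
theorem vanishing_of_pluriharmonic_flat (n : ℕ) (U : Set (Fin n → ℂ)) (hU : IsOpen U)
    (hDU : realDisc n ⊆ U) (φ : (Fin n → ℂ) → ℝ)
    (hφ : ∀ x ∈ U, AnalyticAt ℝ φ x)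
    (hddc : ∀ x ∈ U, ∀ v w : Fin n → ℂ, ddC φ x v w = 0)
    (h0 : ∀ x ∈ realDisc n, φ x = 0)
    (hy : ∀ x ∈ realDisc n, ∀ k : Fin n, fderiv ℝ φ x (Pi.single k Complex.I) = 0) :
    (∀ x ∈ realDisc n, ∀ m : ℕ, iteratedFDeriv ℝ m φ x = 0) ∧
      ∃ V : Set (Fin n → ℂ), IsOpen V ∧ realDisc n ⊆ V ∧ ∀ z ∈ V, φ z = 0 := by
  have hSU : openRealDisc n ⊆ U := openRealDisc_subset_realDisc.trans hDU
  have hS (m : ℕ) : EqOn (iteratedFDeriv ℝ m φ) 0 (openRealDisc n) :=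
    iteratedFDeriv_eq_zero_of_mem_openRealDisc (fun x hx => hφ x (hSU hx))
      (fun x hx => eventually_of_mem (hU.mem_nhds (hSU hx)) (hddc ·))
      (fun x hx => h0 x (openRealDisc_subset_realDisc hx))
      (fun x hx => hy x (openRealDisc_subset_realDisc hx)) m
  have hD (x) (hx : x ∈ realDisc n) (m : ℕ) : iteratedFDeriv ℝ m φ x = 0 :=
    (hS m).of_subset_closure ((AnalyticOnNhd.iteratedFDeriv hφ m).continuousOn.mono hDU)
      continuousOn_const openRealDisc_subset_realDisc realDisc_subset_closure_openRealDisc hx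
  refine ⟨hD, {z | ∀ᶠ y in 𝓝 z, φ y = 0}, isOpen_setOfPred_eventually_nhds,
    fun x hx => (hφ x (hDU hx)).eventually_eq_zero_of_iteratedFDeriv_eq_zero (hD x hx),
    fun z hz => hz.self_of_nhds⟩
end

section
/- Uniqueness of Kähler potentials with prescribed boundary data on a totally real disc: if φ₁, φ₂ are real analytic functions on a neighborhood of D^n in C^n with −dd^C φ₁ = −dd^C φ₂, φ₁|_{D^n} = φ₂|_{D^n}, and d^C φ₁|_{T D^n} = d^C φ₂|_{T D^n} = 0, then φ₁ = φ₂ on a neighborhood of D^n. -/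
open Complex Filter Set Topology

section DirectionalDerivative

variable {E F : Type*} [NormedAddCommGroup E] [NormedSpace ℝ E]
  [NormedAddCommGroup F] [NormedSpace ℝ F] {f g : E → F} {x : E}

noncomputable def dirDeriv (v : E) (f : E → F) : E → F := fun x => fderiv ℝ f x v

theorem dirDeriv_sub (hf : DifferentiableAt ℝ f x) (hg : DifferentiableAt ℝ g x) (v : E) :
    dirDeriv v (f - g) x = dirDeriv v f x - dirDeriv v g x := by
  simp [dirDeriv, fderiv_sub hf hg]

theorem Filter.EventuallyEq.dirDeriv_eq (h : f =ᶠ[𝓝 x] g) (v : E) :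
    dirDeriv v f x = dirDeriv v g x := by
  simp [dirDeriv, h.fderiv_eq]

theorem dirDeriv_eq_zero_of_eventuallyEq_zero (h : f =ᶠ[𝓝 x] 0) (v : E) :
    dirDeriv v f x = 0 := by
  rw [h.dirDeriv_eq]
  simp [dirDeriv]

theorem ContDiffAt.dirDeriv {m : ℕ} (hf : ContDiffAt ℝ (m + 1) f x) (v : E) :
    ContDiffAt ℝ m (dirDeriv v f) x :=
  (ContinuousLinearMap.apply ℝ F v).contDiff.contDiffAt.comp x (hf.fderiv_right le_rfl)

theorem AnalyticAt.dirDeriv [CompleteSpace F] (hf : AnalyticAt ℝ f x) (v : E) :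
    AnalyticAt ℝ (dirDeriv v f) x :=
  (ContinuousLinearMap.apply ℝ F v).analyticAt _ |>.comp hf.fderiv

theorem dirDeriv_dirDeriv_eq_fderiv_fderiv (hf : DifferentiableAt ℝ (fderiv ℝ f) x) (a b : E) :
    dirDeriv a (dirDeriv b f) x = fderiv ℝ (fderiv ℝ f) x a b := by
  have := ((ContinuousLinearMap.apply ℝ F b).hasFDerivAt.comp x hf.hasFDerivAt).fderiv
  exact congrArg (· a) this

theorem dirDeriv_comm (hf : ContDiffAt ℝ 2 f x) (a b : E) :
    dirDeriv a (dirDeriv b f) x = dirDeriv b (dirDeriv a f) x := by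
  have hdiff : DifferentiableAt ℝ (fderiv ℝ f) x :=
    (hf.fderiv_right (m := 1) (by norm_num)).differentiableAt one_ne_zero
  rw [dirDeriv_dirDeriv_eq_fderiv_fderiv hdiff, dirDeriv_dirDeriv_eq_fderiv_fderiv hdiff]
  exact hf.isSymmSndFDerivAt (by simp [minSmoothness_of_isRCLikeNormedField]) a b

theorem dirDeriv_comm₃ (hf : ContDiffAt ℝ 3 f x) (a b c : E) :
    dirDeriv a (dirDeriv b (dirDeriv c f)) x = dirDeriv c (dirDeriv a (dirDeriv b f)) x := by
  have hbc : dirDeriv b (dirDeriv c f) =ᶠ[𝓝 x] dirDeriv c (dirDeriv b f) := by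
    filter_upwards [hf.eventually (by simp)] with y hy
    exact dirDeriv_comm (hy.of_le (by norm_num)) b c
  rw [hbc.dirDeriv_eq]
  exact dirDeriv_comm (hf.dirDeriv (m := 2) b) a c

theorem dirDeriv_eq_zero_of_eqOn_submodule {P : Submodule ℝ E} {U : Set E} (hU : IsOpen U)
    (hf0 : ∀ y ∈ U, y ∈ P → f y = 0) (hxU : x ∈ U) (hxP : x ∈ P) (hf : DifferentiableAt ℝ f x)
    {v : E} (hv : v ∈ P) : dirDeriv v f x = 0 := by
  have hline : (fun t : ℝ => f (x + t • v)) =ᶠ[𝓝 0] fun _ => 0 := by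
    have hcont : Continuous fun t : ℝ => x + t • v := by fun_prop
    filter_upwards [hcont.continuousAt.preimage_mem_nhds (by simpa using hU.mem_nhds hxU)]
      with t ht using hf0 _ ht (P.add_mem hxP (P.smul_mem t hv))
  rw [dirDeriv, ← hf.lineDeriv_eq_fderiv, lineDeriv, hline.deriv_eq, deriv_const]

theorem iteratedFDeriv_succ_apply_eq_dirDeriv {m : ℕ} (hf : ContDiffAt ℝ (m + 1) f x)
    (v : Fin (m + 1) → E) :
    iteratedFDeriv ℝ (m + 1) f x v =
      iteratedFDeriv ℝ m (dirDeriv (v (Fin.last m)) f) x (Fin.init v) := by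
  have h : dirDeriv (v (Fin.last m)) f =
      ContinuousLinearMap.apply ℝ F (v (Fin.last m)) ∘ fderiv ℝ f := rfl
  rw [iteratedFDeriv_succ_apply_right, h,
    (ContinuousLinearMap.apply ℝ F _).iteratedFDeriv_comp_left (hf.fderiv_right le_rfl) le_rfl]
  rfl

end DirectionalDerivative

theorem AnalyticAt.eventuallyEq_zero_of_iteratedFDeriv_eq_zero {𝕜 E F : Type*}
    [NontriviallyNormedField 𝕜] [CharZero 𝕜] [NormedAddCommGroup E] [NormedSpace 𝕜 E]
    [NormedAddCommGroup F] [NormedSpace 𝕜 F] [CompleteSpace F] {f : E → F} {x : E}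
    (hf : AnalyticAt 𝕜 f x) (h : ∀ m, iteratedFDeriv 𝕜 m f x = 0) : f =ᶠ[𝓝 x] 0 := by
  obtain ⟨p, r, hp⟩ := hf
  filter_upwards [Metric.eball_mem_nhds x hp.r_pos] with y hy
  have := hp.hasSum_iteratedFDeriv (y := y - x) (by simpa [edist_eq_enorm_sub] using hy)
  simp only [h, zero_apply, smul_zero, add_sub_cancel] at this
  exact this.unique hasSum_zero

theorem AnalyticOnNhd.exists_isOpen_superset_eqOn {E F : Type*} [NormedAddCommGroup E]
    [NormedSpace ℝ E] [NormedAddCommGroup F] [NormedSpace ℝ F] {f g : E → F} {U K : Set E}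
    (hU : IsOpen U) (hf : AnalyticOnNhd ℝ f U) (hg : AnalyticOnNhd ℝ g U) (hK : IsPreconnected K)
    (hKU : K ⊆ U) {x : E} (hx : x ∈ K) (hfg : f =ᶠ[𝓝 x] g) :
    ∃ V, IsOpen V ∧ K ⊆ V ∧ EqOn f g V :=
  ⟨connectedComponentIn U x, hU.connectedComponentIn, hK.subset_connectedComponentIn hx hKU,
    (hf.mono (connectedComponentIn_subset U x)).eqOn_of_preconnected_of_eventuallyEq
      (hg.mono (connectedComponentIn_subset U x)) isPreconnected_connectedComponentIn
      (mem_connectedComponentIn (hKU hx)) hfg⟩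

section ComplexSpace

variable {n : ℕ}

def realSubspace (n : ℕ) : Submodule ℝ (Fin n → ℂ) where
  carrier := {z | ∀ k, (z k).im = 0}
  add_mem' hz hw k := by simp [hz k, hw k]
  zero_mem' k := by simp
  smul_mem' t z hz k := by simp [hz k]

theorem ddC_eq_dirDeriv (φ : (Fin n → ℂ) → ℝ) (x v w : Fin n → ℂ) :
    ddC φ x v w = dirDeriv v (dirDeriv (I • w) φ) x - dirDeriv w (dirDeriv (I • v) φ) x := rfl

theorem pi_basisOneI_mem (s : Σ _ : Fin n, Fin 2) :
    (Pi.basis fun _ => Complex.basisOneI) s ∈ realSubspace n ∨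
      ∃ u ∈ realSubspace n, (Pi.basis fun _ => Complex.basisOneI) s = I • u := by
  obtain ⟨k, j⟩ := s
  fin_cases j
  · left
    intro l
    simp [Pi.single_apply, apply_ite]
  · right
    refine ⟨Pi.single k 1, fun l => by simp [Pi.single_apply, apply_ite], ?_⟩
    simp [← Pi.single_smul]

theorem zero_mem_realDisc (n : ℕ) : (0 : Fin n → ℂ) ∈ realDisc n := by
  simp [realDisc]

theorem starConvex_realDisc (n : ℕ) : StarConvex ℝ 0 (realDisc n) := by
  refine starConvex_zero_iff.mpr fun z ⟨him, hre⟩ a ha ha1 => ⟨fun k => by simp [him k], ?_⟩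
  simp only [Pi.smul_apply, Complex.smul_re, smul_eq_mul, mul_pow, ← Finset.mul_sum]
  exact mul_le_one₀ (pow_le_one₀ ha ha1) (Finset.sum_nonneg fun k _ => sq_nonneg _) hre

theorem isPreconnected_realDisc (n : ℕ) : IsPreconnected (realDisc n) :=
  ((starConvex_realDisc n).isPathConnected (zero_mem_realDisc n)).isConnected.isPreconnected

variable {φ ψ : (Fin n → ℂ) → ℝ} {x : Fin n → ℂ}

theorem dC_sub (hφ : DifferentiableAt ℝ φ x) (hψ : DifferentiableAt ℝ ψ x) (v : Fin n → ℂ) :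
    dC (φ - ψ) x v = dC φ x v - dC ψ x v :=
  dirDeriv_sub hφ hψ _

theorem ddC_sub (hφ : ContDiffAt ℝ 2 φ x) (hψ : ContDiffAt ℝ 2 ψ x) (v w : Fin n → ℂ) :
    ddC (φ - ψ) x v w = ddC φ x v w - ddC ψ x v w := by
  have hsub : ∀ u, dirDeriv u (φ - ψ) =ᶠ[𝓝 x] dirDeriv u φ - dirDeriv u ψ := fun u => by
    filter_upwards [hφ.eventually (by simp), hψ.eventually (by simp)] with y hφy hψy
    exact dirDeriv_sub (hφy.differentiableAt two_ne_zero) (hψy.differentiableAt two_ne_zero) u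
  have hdiff : ∀ {χ : (Fin n → ℂ) → ℝ}, ContDiffAt ℝ 2 χ x → ∀ u,
      DifferentiableAt ℝ (dirDeriv u χ) x := fun hχ u =>
    (hχ.dirDeriv (m := 1) u).differentiableAt one_ne_zero
  simp only [ddC_eq_dirDeriv, (hsub _).dirDeriv_eq, dirDeriv_sub (hdiff hφ _) (hdiff hψ _)]
  ring

theorem dC_dirDeriv (hφ : ContDiffAt ℝ 2 φ x) (w v : Fin n → ℂ) :
    dC (dirDeriv w φ) x v = dirDeriv w (fun y => dC φ y v) x :=
  dirDeriv_comm hφ _ _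

theorem dC_dirDeriv_I_smul (φ : (Fin n → ℂ) → ℝ) (x u v : Fin n → ℂ) :
    dC (dirDeriv (I • u) φ) x v = -ddC φ x u (I • v) - dirDeriv u (dirDeriv v φ) x := by
  have h : dirDeriv (I • I • v) φ = -dirDeriv v φ := by
    funext y
    simp [dirDeriv, smul_smul]
  rw [ddC_eq_dirDeriv, h]
  simp only [dirDeriv, fderiv_neg, neg_apply, dC]
  ring

theorem ddC_dirDeriv (hφ : ContDiffAt ℝ 3 φ x) (w a b : Fin n → ℂ) :
    ddC (dirDeriv w φ) x a b = dirDeriv w (fun y => ddC φ y a b) x := by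
  have hdiff : ∀ u v, DifferentiableAt ℝ (dirDeriv u (dirDeriv v φ)) x := fun u v =>
    ((hφ.dirDeriv (m := 2) v).dirDeriv (m := 1) u).differentiableAt one_ne_zero
  rw [ddC_eq_dirDeriv, dirDeriv_comm₃ hφ a, dirDeriv_comm₃ hφ b]
  exact (dirDeriv_sub (hdiff _ _) (hdiff _ _) w).symm

end ComplexSpace

structure PluriharmonicZeroCauchyData {n : ℕ} (U : Set (Fin n → ℂ)) (f : (Fin n → ℂ) → ℝ) :
    Prop where
  analyticOnNhd : AnalyticOnNhd ℝ f U
  ddC_eq_zero : ∀ x ∈ U, ∀ v w, ddC f x v w = 0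
  eq_zero : ∀ x ∈ U, x ∈ realSubspace n → f x = 0
  dC_eq_zero : ∀ x ∈ U, x ∈ realSubspace n → ∀ v ∈ realSubspace n, dC f x v = 0

namespace PluriharmonicZeroCauchyData

variable {n : ℕ} {U : Set (Fin n → ℂ)} {f : (Fin n → ℂ) → ℝ}

theorem dirDeriv_eq_zero (hU : IsOpen U) (hf : PluriharmonicZeroCauchyData U f) {x : Fin n → ℂ}
    (hxU : x ∈ U) (hxR : x ∈ realSubspace n) {v : Fin n → ℂ} (hv : v ∈ realSubspace n) :
    dirDeriv v f x = 0 :=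
  dirDeriv_eq_zero_of_eqOn_submodule hU hf.eq_zero hxU hxR
    (hf.analyticOnNhd x hxU).differentiableAt hv

theorem ddC_dirDeriv_eq_zero (hU : IsOpen U) (hf : PluriharmonicZeroCauchyData U f)
    (w : Fin n → ℂ) : ∀ x ∈ U, ∀ a b, ddC (dirDeriv w f) x a b = 0 := fun x hx a b => by
  rw [ddC_dirDeriv (hf.analyticOnNhd x hx).contDiffAt]
  refine dirDeriv_eq_zero_of_eventuallyEq_zero ?_ w
  filter_upwards [hU.mem_nhds hx] with y hy using hf.ddC_eq_zero y hy a b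

theorem dirDeriv_of_mem_realSubspace (hU : IsOpen U) (hf : PluriharmonicZeroCauchyData U f)
    {w : Fin n → ℂ} (hw : w ∈ realSubspace n) : PluriharmonicZeroCauchyData U (dirDeriv w f) where
  analyticOnNhd x hx := (hf.analyticOnNhd x hx).dirDeriv w
  ddC_eq_zero := hf.ddC_dirDeriv_eq_zero hU w
  eq_zero x hxU hxR := hf.dirDeriv_eq_zero hU hxU hxR hw
  dC_eq_zero x hxU hxR v hv := by
    rw [dC_dirDeriv (hf.analyticOnNhd x hxU).contDiffAt]
    exact dirDeriv_eq_zero_of_eqOn_submodule hU (fun y hyU hyR => hf.dC_eq_zero y hyU hyR v hv)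
      hxU hxR ((hf.analyticOnNhd x hxU).dirDeriv _).differentiableAt hw

theorem dirDeriv_I_smul (hU : IsOpen U) (hf : PluriharmonicZeroCauchyData U f)
    {u : Fin n → ℂ} (hu : u ∈ realSubspace n) :
    PluriharmonicZeroCauchyData U (dirDeriv (I • u) f) where
  analyticOnNhd x hx := (hf.analyticOnNhd x hx).dirDeriv _
  ddC_eq_zero := hf.ddC_dirDeriv_eq_zero hU _
  eq_zero x hxU hxR := hf.dC_eq_zero x hxU hxR u hu
  dC_eq_zero x hxU hxR v hv := by
    have hvf : PluriharmonicZeroCauchyData U (dirDeriv v f) :=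
      hf.dirDeriv_of_mem_realSubspace hU hv
    rw [dC_dirDeriv_I_smul, hf.ddC_eq_zero x hxU, hvf.dirDeriv_eq_zero hU hxU hxR hu]
    simp

theorem iteratedFDeriv_apply_eq_zero (hU : IsOpen U) {m : ℕ} {v : Fin m → Fin n → ℂ}
    (hv : ∀ i, v i ∈ realSubspace n ∨ ∃ u ∈ realSubspace n, v i = I • u)
    (hf : PluriharmonicZeroCauchyData U f) {x : Fin n → ℂ} (hxU : x ∈ U)
    (hxR : x ∈ realSubspace n) : iteratedFDeriv ℝ m f x v = 0 := by
  induction m generalizing f with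
  | zero => simpa using hf.eq_zero x hxU hxR
  | succ m ih =>
    have hf' : PluriharmonicZeroCauchyData U (dirDeriv (v (Fin.last m)) f) := by
      rcases hv (Fin.last m) with hw | ⟨u, hu, hw⟩
      · exact hf.dirDeriv_of_mem_realSubspace hU hw
      · exact hw ▸ hf.dirDeriv_I_smul hU hu
    rw [iteratedFDeriv_succ_apply_eq_dirDeriv (hf.analyticOnNhd x hxU).contDiffAt]
    exact ih (fun i => hv _) hf'

theorem iteratedFDeriv_eq_zero (hU : IsOpen U) (hf : PluriharmonicZeroCauchyData U f)
    {x : Fin n → ℂ} (hxU : x ∈ U) (hxR : x ∈ realSubspace n) (m : ℕ) :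
    iteratedFDeriv ℝ m f x = 0 := by
  apply ContinuousMultilinearMap.toMultilinearMap_injective
  exact Module.Basis.ext_multilinear (fun _ => Pi.basis fun _ => Complex.basisOneI) fun s =>
    iteratedFDeriv_apply_eq_zero hU (fun i => pi_basisOneI_mem (s i)) hf hxU hxR

theorem eventuallyEq_zero (hU : IsOpen U) (hf : PluriharmonicZeroCauchyData U f)
    {x : Fin n → ℂ} (hxU : x ∈ U) (hxR : x ∈ realSubspace n) : f =ᶠ[𝓝 x] 0 :=
  (hf.analyticOnNhd x hxU).eventuallyEq_zero_of_iteratedFDeriv_eq_zero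
    (hf.iteratedFDeriv_eq_zero hU hxU hxR)

end PluriharmonicZeroCauchyData

/-- Uniqueness of Kähler potentials with prescribed boundary data on the totally real disc
`D^n`: two real analytic functions with the same `dd^ℂ`, the same restriction to `D^n`, and
whose twisted differentials `d^ℂφ` annihilate the tangent spaces of `D^n`, agree on a
neighborhood of `D^n`. -/
theorem potential_uniqueness (n : ℕ) (U : Set (Fin n → ℂ)) (hU : IsOpen U)
    (hDU : realDisc n ⊆ U) (φ₁ φ₂ : (Fin n → ℂ) → ℝ)
    (hφ₁ : ∀ x ∈ U, AnalyticAt ℝ φ₁ x) (hφ₂ : ∀ x ∈ U, AnalyticAt ℝ φ₂ x)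
    (hddc : ∀ x ∈ U, ∀ v w : Fin n → ℂ, ddC φ₁ x v w = ddC φ₂ x v w)
    (heq : ∀ x ∈ realDisc n, φ₁ x = φ₂ x)
    (ht₁ : ∀ x ∈ realDisc n, ∀ v : Fin n → ℂ, (∀ k, (v k).im = 0) → dC φ₁ x v = 0)
    (ht₂ : ∀ x ∈ realDisc n, ∀ v : Fin n → ℂ, (∀ k, (v k).im = 0) → dC φ₂ x v = 0) :
    ∃ V : Set (Fin n → ℂ), IsOpen V ∧ realDisc n ⊆ V ∧ Set.EqOn φ₁ φ₂ V := by
  set W := U ∩ {z | ∑ k, (z k).re ^ 2 < 1}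
  have hW : IsOpen W := hU.inter (isOpen_lt (by fun_prop) continuous_const)
  have hWD : ∀ x ∈ W, x ∈ realSubspace n → x ∈ realDisc n := fun x hxW hxR => ⟨hxR, hxW.2.le⟩
  have hψ : PluriharmonicZeroCauchyData W (φ₁ - φ₂) := {
    analyticOnNhd := (AnalyticOnNhd.sub hφ₁ hφ₂).mono inter_subset_left
    ddC_eq_zero := fun x hx v w => by
      rw [ddC_sub (hφ₁ x hx.1).contDiffAt (hφ₂ x hx.1).contDiffAt, hddc x hx.1, sub_self]
    eq_zero := fun x hxW hxR => sub_eq_zero.mpr (heq x (hWD x hxW hxR))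
    dC_eq_zero := fun x hxW hxR v hv => by
      rw [dC_sub (hφ₁ x hxW.1).differentiableAt (hφ₂ x hxW.1).differentiableAt,
        ht₁ x (hWD x hxW hxR) v hv, ht₂ x (hWD x hxW hxR) v hv, sub_self] }
  have h0U : (0 : Fin n → ℂ) ∈ U := hDU (zero_mem_realDisc n)
  have hφ : φ₁ =ᶠ[𝓝 0] φ₂ :=
    (hψ.eventuallyEq_zero hW ⟨h0U, by simp⟩ (realSubspace n).zero_mem).mono
      fun y hy => sub_eq_zero.mp hy
  exact AnalyticOnNhd.exists_isOpen_superset_eqOn hU hφ₁ hφ₂ (isPreconnected_realDisc n) hDU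
    (zero_mem_realDisc n) hφ
end
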